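/- For all real x ≥ 2, the series Σ_{n≥1} (1/n) Σ_{j=0}^{n} C(n,j)·C(2j,j)·(−1/x)^j converges (absolutely in n after summing the inner finite sum) and equals ln x. -/

import Mathlib

/-!
Since `∫₀^π sin^(2j) θ dθ = π C(2j,j) / 4^j`, the inner sum is `(1/π) ∫₀^π r(θ)^n dθ` with
`r(θ) = 1 - 4 sin²θ / x`. Summing `Σ rⁿ/n = -log (1 - r)` under the integral gives
`(1/π) ∫₀^π -log (4 sin²θ / x) dθ = log x`, by `∫₀^π log sin = -π log 2`. For `x ≥ 2` we have
`|r| < 1` off a null set, and dominated convergence applies with the dominant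
`-log (1 - |r|) ≤ log 2 - log (1 - r) - log (1 + r)`, which is integrable because logarithms of
analytic functions are.
-/

open MeasureTheory Real Set Filter Finset Interval

theorem prod_odd_div_even_eq_choose_div_four_pow (n : ℕ) :
    ∏ i ∈ range n, (2 * (i : ℝ) + 1) / (2 * i + 2) = ((2 * n).choose n : ℝ) / 4 ^ n := by
  induction n with
  | zero => simp
  | succ k ih =>
    have h : ((k : ℝ) + 1) * ((2 * (k + 1)).choose (k + 1) : ℝ) =
        2 * (2 * k + 1) * ((2 * k).choose k : ℝ) := by
      exact_mod_cast Nat.succ_mul_centralBinom_succ k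
    rw [prod_range_succ, ih, div_mul_div_comm, div_eq_div_iff (by positivity) (by positivity)]
    linear_combination (-2 * (4 : ℝ) ^ k) * h

theorem integral_sin_pow_two_mul (j : ℕ) :
    ∫ θ in 0..π, sin θ ^ (2 * j) = π * ((2 * j).choose j / 4 ^ j) := by
  rw [integral_sin_pow_even, prod_odd_div_even_eq_choose_div_four_pow]

theorem integral_one_add_mul_sin_sq_pow (a : ℝ) (m : ℕ) :
    ∫ θ in 0..π, (1 + 4 * a * sin θ ^ 2) ^ m =
      π * ∑ j ∈ range (m + 1), (m.choose j : ℝ) * (2 * j).choose j * a ^ j := by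
  have hexpand : ∀ θ, (1 + 4 * a * sin θ ^ 2) ^ m =
      ∑ j ∈ range (m + 1), (m.choose j * (4 * a) ^ j) * sin θ ^ (2 * j) := by
    intro θ
    rw [add_comm, add_pow]
    refine sum_congr rfl fun j _ => ?_
    rw [one_pow, mul_one, mul_pow, pow_mul]
    ring
  simp_rw [hexpand]
  rw [intervalIntegral.integral_finsetSum
    fun j _ => (by fun_prop : Continuous _).intervalIntegrable _ _, mul_sum]
  refine sum_congr rfl fun j _ => ?_
  rw [intervalIntegral.integral_const_mul, integral_sin_pow_two_mul, mul_pow]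
  field_simp

theorem neg_log_one_sub_abs_le {r : ℝ} (hr : |r| < 1) :
    -log (1 - |r|) ≤ log 2 - log (1 - r) - log (1 + r) := by
  obtain ⟨hr₁, hr₂⟩ := abs_lt.mp hr
  have hsq : (1 - r) * (1 + r) / 2 ≤ 1 - |r| := by
    nlinarith [sq_nonneg (1 - |r|), sq_abs r]
  have hlog := log_le_log (by nlinarith) hsq
  rw [log_div (by nlinarith) two_ne_zero, log_mul (by linarith) (by linarith)] at hlog
  linarith

theorem hasSum_integral_pow_div_log_of_abs_lt_one {f : ℝ → ℝ} {a b : ℝ}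
    (hf : AnalyticOnNhd ℝ f [[a, b]]) (hf_lt : ∀ᵐ t, t ∈ Ι a b → |f t| < 1) :
    HasSum (fun n : ℕ => ∫ t in a..b, f t ^ (n + 1) / (n + 1)) (∫ t in a..b, -log (1 - f t)) := by
  have hf_cont : ContinuousOn f (Ι a b) := hf.continuousOn.mono uIoc_subset_uIcc
  have hf_meas : AEStronglyMeasurable f (volume.restrict (Ι a b)) :=
    hf_cont.aestronglyMeasurable measurableSet_uIoc
  have hlog_sub : IntervalIntegrable (fun t => log (1 - f t)) volume a b :=
    (analyticOnNhd_const.sub hf).meromorphicOn.intervalIntegrable_log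
  have hlog_add : IntervalIntegrable (fun t => log (1 + f t)) volume a b :=
    (analyticOnNhd_const.add hf).meromorphicOn.intervalIntegrable_log
  have hdom : IntervalIntegrable (fun t => -log (1 - |f t|)) volume a b := by
    refine ((intervalIntegrable_const (c := log 2)).sub hlog_sub |>.sub hlog_add).mono_fun' ?_ ?_
    · exact (measurable_log.comp_aemeasurable
        (aemeasurable_const.sub hf_meas.aemeasurable.abs)).neg.aestronglyMeasurable
    · filter_upwards [(ae_restrict_iff' measurableSet_uIoc).2 hf_lt] with t ht
      rw [norm_of_nonneg (neg_nonneg.2 (log_nonpos (by linarith) (by linarith [abs_nonneg (f t)])))]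
      exact neg_log_one_sub_abs_le ht
  refine intervalIntegral.hasSum_integral_of_dominated_convergence
    (fun n t => |f t| ^ (n + 1) / (n + 1)) (fun n =>
      ((hf_cont.pow _).div_const _).aestronglyMeasurable measurableSet_uIoc) ?_ ?_ ?_ ?_
  · intro n
    filter_upwards with t _
    rw [norm_div, norm_pow, norm_eq_abs, norm_of_nonneg (by positivity)]
  · filter_upwards [hf_lt] with t ht hmem
    exact (hasSum_pow_div_log_of_abs_lt_one ((abs_abs _).trans_lt (ht hmem))).summable
  · refine (intervalIntegrable_congr_ae ?_).1 hdom
    filter_upwards [(ae_restrict_iff' measurableSet_uIoc).2 hf_lt] with t ht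
    exact (hasSum_pow_div_log_of_abs_lt_one (by rwa [abs_abs])).tsum_eq.symm
  · filter_upwards [hf_lt] with t ht hmem
    exact hasSum_pow_div_log_of_abs_lt_one (ht hmem)

theorem ae_sin_ne_zero_and_cos_ne_zero : ∀ᵐ θ : ℝ, sin θ ≠ 0 ∧ cos θ ≠ 0 := by
  have hsin : ∀ᵐ θ : ℝ, sin θ ≠ 0 := by
    refine measure_mono_null (fun θ hθ => ?_)
      ((countable_range fun n : ℤ => (n : ℝ) * π).measure_zero _)
    exact sin_eq_zero_iff.1 (not_not.1 hθ)
  have hcos : ∀ᵐ θ : ℝ, cos θ ≠ 0 := by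
    refine measure_mono_null (fun θ hθ => ?_)
      ((countable_range fun n : ℤ => (2 * (n : ℝ) + 1) * π / 2).measure_zero _)
    obtain ⟨n, hn⟩ := cos_eq_zero_iff.1 (not_not.1 hθ)
    exact ⟨n, hn.symm⟩
  filter_upwards [hsin, hcos] with θ hs hc using ⟨hs, hc⟩

theorem abs_one_sub_four_mul_sin_sq_div_lt_one {x θ : ℝ} (hx : 2 ≤ x) (hs : sin θ ≠ 0)
    (hc : cos θ ≠ 0) : |1 - 4 * sin θ ^ 2 / x| < 1 := by
  have hs2 : 0 < sin θ ^ 2 := by positivity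
  have hsin_lt : sin θ ^ 2 < 1 := by
    nlinarith [sin_sq_add_cos_sq θ, pow_pos (abs_pos.2 hc) 2, sq_abs (cos θ)]
  have hpos : 0 < 4 * sin θ ^ 2 / x := by positivity
  have hlt : 4 * sin θ ^ 2 / x < 2 := by rw [div_lt_iff₀ (by linarith)]; nlinarith
  rw [abs_lt]
  constructor <;> linarith

theorem integral_neg_log_four_mul_sin_sq_div {x : ℝ} (hx : 0 < x) :
    ∫ θ in 0..π, -log (4 * sin θ ^ 2 / x) = π * log x := by
  have hlog : ∀ᵐ θ : ℝ, θ ∈ Ι 0 π →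
      -log (4 * sin θ ^ 2 / x) = log x - 2 * log 2 - 2 * log (sin θ) := by
    filter_upwards [ae_sin_ne_zero_and_cos_ne_zero] with θ ⟨hs, _⟩ _
    rw [log_div (by positivity) hx.ne', log_mul (by norm_num) (by positivity), log_pow,
      show (4 : ℝ) = 2 ^ 2 by norm_num, log_pow]
    push_cast
    ring
  have hint : IntervalIntegrable (fun θ => 2 * log (sin θ)) volume 0 π :=
    intervalIntegrable_log_sin.const_mul 2
  rw [intervalIntegral.integral_congr_ae hlog,
    intervalIntegral.integral_sub intervalIntegrable_const hint,
    intervalIntegral.integral_const_mul, integral_log_sin_zero_pi, intervalIntegral.integral_const]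
  simp only [sub_zero, smul_eq_mul]
  ring

/-- For every real `x ≥ 2`, the series
`Σ_{n≥1} (1/n) Σ_{j=0}^n C(n,j) C(2j,j) (-1/x)^j` converges to `ln x`. -/
theorem log_eq_double_series_of_two_le (x : ℝ) (hx : 2 ≤ x) :
    HasSum (fun n : ℕ =>
      (1 / (n + 1 : ℝ)) *
        ∑ j ∈ Finset.range (n + 2),
          ((n + 1).choose j : ℝ) * ((2 * j).choose j : ℝ) * (-1 / x) ^ j)
      (Real.log x) := by
  set f : ℝ → ℝ := fun θ => 1 + 4 * (-1 / x) * sin θ ^ 2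
  have hf_an : AnalyticOnNhd ℝ f [[0, π]] := fun θ _ => by fun_prop
  have hf_lt : ∀ᵐ θ, θ ∈ Ι 0 π → |f θ| < 1 := by
    filter_upwards [ae_sin_ne_zero_and_cos_ne_zero] with θ ⟨hs, hc⟩ _
    convert abs_one_sub_four_mul_sin_sq_div_lt_one hx hs hc using 2
    ring
  have hterm (n : ℕ) : ∫ θ in 0..π, f θ ^ (n + 1) / (n + 1) = π * ((1 / (n + 1 : ℝ)) *
      ∑ j ∈ range (n + 2), ((n + 1).choose j : ℝ) * (2 * j).choose j * (-1 / x) ^ j) := by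
    rw [intervalIntegral.integral_div, integral_one_add_mul_sin_sq_pow]
    ring
  have hlimit : ∫ θ in 0..π, -log (1 - f θ) = π * log x := by
    rw [← integral_neg_log_four_mul_sin_sq_div (by linarith)]
    congr with θ
    simp only [f]
    ring_nf
  have hsum := hasSum_integral_pow_div_log_of_abs_lt_one hf_an hf_lt
  rw [funext hterm, hlimit] at hsum
  exact (hasSum_mul_left_iff pi_ne_zero).1 hsum
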